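/- Let G be a finite non-trivial Cpo-group. Then there exists a prime p dividing |G| and a normal subgroup N of G of order p such that every nilpotent normal subgroup of G is contained in N; in other words, the Fitting subgroup F(G) of G has prime order p, equals O_p(G), and O_{p'}(G) = 1. -/

import Mathlib

/-- A group `G` is a Cpo-group if the centralizer of every non-trivial element
has prime order. -/
def IsCpoGroup (G : Type*) [Group G] : Prop :=
  ∀ x : G, x ≠ 1 → (Nat.card (Subgroup.centralizer ({x} : Set G))).Prime

/-!
In a Cpo-group a nontrivial subgroup contained in the centralizer of a nontrivial element is that
centralizer, so every nontrivial subgroup with nontrivial center has prime order. In particular all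
Sylow subgroups are cyclic, and `G` is a solvable Z-group; the last nontrivial term of its derived
series is then a normal abelian subgroup `A` of prime order with `C_G(A) = A`. A nilpotent normal
subgroup `M` either meets `A` trivially, and then centralizes it, or contains it, and then it is
contained in the centralizer of a central element of `M`, which is `A`.
-/

open Subgroup

theorem Subgroup.eq_of_le_of_card_prime {G : Type*} [Group G] {H K : Subgroup G} (hHK : H ≤ K)
    (hK : (Nat.card K).Prime) (hH : H ≠ ⊥) : H = K := by
  have : Finite K := Nat.finite_of_card_ne_zero hK.ne_zero
  refine eq_of_le_of_card_ge hHK ?_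
  rw [(hK.eq_one_or_self_of_dvd _ (card_dvd_of_le hHK)).resolve_left
    (fun h ↦ hH (card_eq_one.mp h))]

theorem Subgroup.ne_bot_of_mem_of_ne_one {G : Type*} [Group G] {H : Subgroup G} {x : G}
    (hx : x ∈ H) (h1 : x ≠ 1) : H ≠ ⊥ :=
  fun h ↦ h1 (mem_bot.mp (h ▸ hx))

theorem Subgroup.exists_mem_ne_one_le_centralizer {G : Type*} [Group G] {H : Subgroup G}
    (hH : center H ≠ ⊥) : ∃ z ∈ H, z ≠ 1 ∧ H ≤ centralizer {z} := by
  obtain ⟨⟨c, hc⟩, hc1⟩ := ne_bot_iff_exists_ne_one.mp hH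
  refine ⟨c, c.2, fun h ↦ hc1 (Subtype.ext (Subtype.ext h)), fun h hh ↦ ?_⟩
  exact mem_centralizer_singleton_iff.mpr (congrArg Subtype.val (mem_center_iff.mp hc ⟨h, hh⟩))

theorem Group.IsSolvable.exists_normal_isMulCommutative_ne_bot (G : Type*) [Group G]
    [Group.IsSolvable G] [Nontrivial G] :
    ∃ A : Subgroup G, A.Normal ∧ IsMulCommutative A ∧ A ≠ ⊥ := by
  classical
  have hex := Group.IsSolvable.solvable (G := G)
  obtain ⟨n, hn⟩ : ∃ n, Nat.find hex = n + 1 := by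
    refine Nat.exists_eq_succ_of_ne_zero fun h ↦ top_ne_bot (α := Subgroup G) ?_
    rw [← derivedSeries_zero G, ← h]
    exact Nat.find_spec hex
  refine ⟨derivedSeries G n, derivedSeries_normal G n, ?_, Nat.find_min hex (by omega)⟩
  rw [← le_centralizer_iff_isMulCommutative, ← commutator_eq_bot_iff_le_centralizer,
    ← derivedSeries_succ, ← hn]
  exact Nat.find_spec hex

namespace IsCpoGroup

variable {G : Type*} [Group G]

theorem eq_centralizer_of_le (hG : IsCpoGroup G) {H : Subgroup G} {z : G} (hz : z ≠ 1)
    (hH : H ≠ ⊥) (hHz : H ≤ centralizer {z}) : H = centralizer {z} :=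
  eq_of_le_of_card_prime hHz (hG z hz) hH

theorem card_prime_of_center_ne_bot (hG : IsCpoGroup G) {H : Subgroup G}
    (hH : center H ≠ ⊥) : (Nat.card H).Prime := by
  obtain ⟨z, hzH, hz, hHz⟩ := exists_mem_ne_one_le_centralizer hH
  rw [hG.eq_centralizer_of_le hz (ne_bot_of_mem_of_ne_one hzH hz) hHz]
  exact hG z hz

theorem isZGroup [Finite G] (hG : IsCpoGroup G) : IsZGroup G := by
  refine ⟨fun p hp P ↦ ?_⟩
  have := Fact.mk hp
  cases subsingleton_or_nontrivial P
  · infer_instance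
  · have hZ := (nontrivial_iff_ne_bot _).mp P.isPGroup'.center_nontrivial
    have := Fact.mk (hG.card_prime_of_center_ne_bot hZ)
    exact isCyclic_of_prime_card rfl

theorem eq_centralizer_of_mem (hG : IsCpoGroup G) {A : Subgroup G} [IsMulCommutative A]
    {z : G} (hzA : z ∈ A) (hz : z ≠ 1) : A = centralizer {z} :=
  hG.eq_centralizer_of_le hz (ne_bot_of_mem_of_ne_one hzA hz)
    ((le_centralizer A).trans (centralizer_le (Set.singleton_subset_iff.mpr hzA)))

theorem le_of_normal_of_isNilpotent (hG : IsCpoGroup G) {A M : Subgroup G} [A.Normal]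
    [IsMulCommutative A] (hA : A ≠ ⊥) [M.Normal] [Group.IsNilpotent M] : M ≤ A := by
  obtain ⟨z, hzA, hz⟩ := A.bot_or_exists_ne_one.resolve_left hA
  have hAz := hG.eq_centralizer_of_mem hzA hz
  by_cases hMA : M ⊓ A = ⊥
  · have hMC : M ≤ centralizer A :=
      commutator_eq_bot_iff_le_centralizer.mp (le_bot_iff.mp (hMA ▸ commutator_le_inf M A))
    exact hAz ▸ hMC.trans (centralizer_le (Set.singleton_subset_iff.mpr hzA))
  · have hAM : A ≤ M := by
      have := hG.eq_centralizer_of_le hz hMA (inf_le_right.trans hAz.le)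
      exact inf_eq_right.mp (this.trans hAz.symm)
    have : Nontrivial M := (nontrivial_iff_ne_bot M).mpr (ne_bot_of_le_ne_bot hA hAM)
    obtain ⟨c, -, hc, hMc⟩ :=
      exists_mem_ne_one_le_centralizer (Group.IsNilpotent.center_ne_bot (G := M))
    rw [hG.eq_centralizer_of_le hc hA (hAM.trans hMc)]
    exact hMc

end IsCpoGroup

theorem stmt_10 (G : Type*) [Group G] [Finite G] (hG : IsCpoGroup G)
    (hnt : Nat.card G ≠ 1) :
    ∃ (p : ℕ) (N : Subgroup G), p.Prime ∧ p ∣ Nat.card G ∧ N.Normal ∧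
      Nat.card N = p ∧
      ∀ M : Subgroup G, M.Normal → Group.IsNilpotent M → M ≤ N := by
  have : IsZGroup G := hG.isZGroup
  have : Nontrivial G :=
    Finite.one_lt_card_iff_nontrivial.mp (by have := Nat.card_pos (α := G); omega)
  obtain ⟨A, hAn, hAc, hA⟩ := Group.IsSolvable.exists_normal_isMulCommutative_ne_bot G
  obtain ⟨z, hzA, hz⟩ := A.bot_or_exists_ne_one.resolve_left hA
  refine ⟨Nat.card A, A, hG.eq_centralizer_of_mem hzA hz ▸ hG z hz, card_subgroup_dvd_card A, hAn,
    rfl, fun M _ _ ↦ hG.le_of_normal_of_isNilpotent hA⟩
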